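/- Assume φ: A → A is surjective. Let (M, α_M) →^i (K, α_K) →^σ (L, α_L) be a central extension of hom-Lie-Rinehart algebras over (A, φ), and let (N, α_N) →^j (L', α_{L'}) →^τ (K, α_K) be a universal α-central extension of (K, α_K). Then the composition Ker(σ∘τ) → (L', α_{L'}) →^{σ∘τ} (L, α_L) is an α-central extension which is universal in the following sense: for every central extension (H, α_H) →^k (F, α_F) →^γ (L, α_L) there exists a unique homomorphism h: (L', α_{L'}) → (F, α_F) over (A, φ) with γ ∘ h = σ ∘ τ. -/

import Mathlib

open TensorProduct Function Set

/-- A hom-Lie-Rinehart algebra structure over `(A, φ)` on the `A`-module `L`. -/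
structure HLR (R A : Type) [CommRing R] [CommRing A] [Algebra R A]
    (φ : A →ₐ[R] A) (L : Type) [AddCommGroup L] [Module R L]
    [Module A L] [IsScalarTower R A L] : Type where
  bracket : L → L → L
  add_left : ∀ x y z, bracket (x + y) z = bracket x z + bracket y z
  add_right : ∀ x y z, bracket x (y + z) = bracket x y + bracket x z
  smul_left : ∀ (r : R) (x y : L), bracket (r • x) y = r • bracket x y
  smul_right : ∀ (r : R) (x y : L), bracket x (r • y) = r • bracket x y
  skew : ∀ x y, bracket x y = - bracket y x
  alpha : L → L
  alpha_add : ∀ x y, alpha (x + y) = alpha x + alpha y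
  alpha_smulR : ∀ (r : R) (x : L), alpha (r • x) = r • alpha x
  rho : L → A → A
  rho_add_left : ∀ x y a, rho (x + y) a = rho x a + rho y a
  rho_smulR_left : ∀ (r : R) (x : L) (a : A), rho (r • x) a = r • rho x a
  rho_add_right : ∀ (x : L) (a b : A), rho x (a + b) = rho x a + rho x b
  rho_smulR_right : ∀ (x : L) (r : R) (a : A), rho x (r • a) = r • rho x a
  rho_deriv : ∀ (x : L) (a b : A), rho x (a * b) = φ a * rho x b + φ b * rho x a
  alpha_bracket : ∀ x y, alpha (bracket x y) = bracket (alpha x) (alpha y)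
  hom_jacobi : ∀ x y z, bracket (alpha x) (bracket y z)
      + bracket (alpha y) (bracket z x) + bracket (alpha z) (bracket x y) = 0
  alpha_smulA : ∀ (a : A) (x : L), alpha (a • x) = φ a • alpha x
  rho_alpha : ∀ (x : L) (a : A), rho (alpha x) (φ a) = φ (rho x a)
  rho_bracket : ∀ (x y : L) (a : A), rho (bracket x y) (φ a)
      = rho (alpha x) (rho y a) - rho (alpha y) (rho x a)
  rho_smulA : ∀ (a : A) (x : L) (b : A), rho (a • x) b = φ a * rho x b
  leibniz : ∀ (x : L) (a : A) (y : L),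
      bracket x (a • y) = φ a • bracket x y + rho x a • alpha y

section Defs

variable {R A : Type} [CommRing R] [CommRing A] [Algebra R A] {φ : A →ₐ[R] A}

/-- Homomorphism of hom-Lie-Rinehart algebras over `(A, φ)`: an `A`-linear map
preserving brackets, the twist maps and the anchors. -/
def IsHLRHom {K L : Type}
    [AddCommGroup K] [Module R K] [Module A K] [IsScalarTower R A K]
    [AddCommGroup L] [Module R L] [Module A L] [IsScalarTower R A L]
    (SK : HLR R A φ K) (SL : HLR R A φ L) (f : K → L) : Prop :=
  (∀ x y, f (x + y) = f x + f y) ∧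
  (∀ (a : A) (x : K), f (a • x) = a • f x) ∧
  (∀ x y, f (SK.bracket x y) = SL.bracket (f x) (f y)) ∧
  (∀ x, f (SK.alpha x) = SL.alpha (f x)) ∧
  (∀ (x : K) (a : A), SL.rho (f x) a = SK.rho x a)

/-- The center `Z_A(L)` of a hom-Lie-Rinehart algebra. -/
def HLR.center {L : Type}
    [AddCommGroup L] [Module R L] [Module A L] [IsScalarTower R A L]
    (S : HLR R A φ L) : Set L :=
  {x | ∀ (a : A) (z : L),
    S.bracket (a • x) z = 0 ∧ S.bracket (a • S.alpha x) z = 0 ∧ S.rho x a = 0}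

/-- `(M, i) → (K, σ)` is a central extension of `L`. -/
def IsCentralExt {M K L : Type}
    [AddCommGroup M] [Module R M] [Module A M] [IsScalarTower R A M]
    [AddCommGroup K] [Module R K] [Module A K] [IsScalarTower R A K]
    [AddCommGroup L] [Module R L] [Module A L] [IsScalarTower R A L]
    (SM : HLR R A φ M) (SK : HLR R A φ K) (SL : HLR R A φ L)
    (i : M → K) (σ : K → L) : Prop :=
  IsHLRHom SM SK i ∧ IsHLRHom SK SL σ ∧ Function.Injective i ∧
  Function.Surjective σ ∧ Set.range i = {k | σ k = 0} ∧
  {k | σ k = 0} ⊆ SK.center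

/-- `(M, i) → (K, σ)` is an `α`-central extension of `L`. -/
def IsAlphaCentralExt {M K L : Type}
    [AddCommGroup M] [Module R M] [Module A M] [IsScalarTower R A M]
    [AddCommGroup K] [Module R K] [Module A K] [IsScalarTower R A K]
    [AddCommGroup L] [Module R L] [Module A L] [IsScalarTower R A L]
    (SM : HLR R A φ M) (SK : HLR R A φ K) (SL : HLR R A φ L)
    (i : M → K) (σ : K → L) : Prop :=
  IsHLRHom SM SK i ∧ IsHLRHom SK SL σ ∧ Function.Injective i ∧
  Function.Surjective σ ∧ Set.range i = {k | σ k = 0} ∧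
  (∀ m : M, i (SM.alpha m) ∈ SK.center)

/-- A hom-Lie-Rinehart algebra is perfect if `L = {L, L}`, the `A`-submodule
generated by all brackets. -/
def HLR.IsPerfect {L : Type}
    [AddCommGroup L] [Module R L] [Module A L] [IsScalarTower R A L]
    (S : HLR R A φ L) : Prop :=
  Submodule.span A {z : L | ∃ x y, z = S.bracket x y} = ⊤

/-- A hom-Lie-Rinehart algebra is `α`-perfect if `L = {α_L(L), α_L(L)}`. -/
def HLR.IsAlphaPerfect {L : Type}
    [AddCommGroup L] [Module R L] [Module A L] [IsScalarTower R A L]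
    (S : HLR R A φ L) : Prop :=
  Submodule.span A {z : L | ∃ x y, z = S.bracket (S.alpha x) (S.alpha y)} = ⊤

/-- Universal central extension. -/
def IsUniversalCentralExt {M K L : Type}
    [AddCommGroup M] [Module R M] [Module A M] [IsScalarTower R A M]
    [AddCommGroup K] [Module R K] [Module A K] [IsScalarTower R A K]
    [AddCommGroup L] [Module R L] [Module A L] [IsScalarTower R A L]
    (SM : HLR R A φ M) (SK : HLR R A φ K) (SL : HLR R A φ L)
    (i : M → K) (σ : K → L) : Prop :=
  IsCentralExt SM SK SL i σ ∧
  ∀ (M' L' : Type)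
    [AddCommGroup M'] [Module R M'] [Module A M'] [IsScalarTower R A M']
    [AddCommGroup L'] [Module R L'] [Module A L'] [IsScalarTower R A L']
    (SM' : HLR R A φ M') (SL' : HLR R A φ L') (j : M' → L') (τ : L' → L),
    IsCentralExt SM' SL' SL j τ →
    ∃! h : K → L', IsHLRHom SK SL' h ∧ ∀ x, τ (h x) = σ x

/-- Universal `α`-central extension. -/
def IsUniversalAlphaCentralExt {M K L : Type}
    [AddCommGroup M] [Module R M] [Module A M] [IsScalarTower R A M]
    [AddCommGroup K] [Module R K] [Module A K] [IsScalarTower R A K]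
    [AddCommGroup L] [Module R L] [Module A L] [IsScalarTower R A L]
    (SM : HLR R A φ M) (SK : HLR R A φ K) (SL : HLR R A φ L)
    (i : M → K) (σ : K → L) : Prop :=
  IsCentralExt SM SK SL i σ ∧
  ∀ (M' L' : Type)
    [AddCommGroup M'] [Module R M'] [Module A M'] [IsScalarTower R A M']
    [AddCommGroup L'] [Module R L'] [Module A L'] [IsScalarTower R A L']
    (SM' : HLR R A φ M') (SL' : HLR R A φ L') (j : M' → L') (τ : L' → L),
    IsAlphaCentralExt SM' SL' SL j τ →
    ∃! h : K → L', IsHLRHom SK SL' h ∧ ∀ x, τ (h x) = σ x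

end Defs

section UceDefs

variable {R A : Type} [CommRing R] [CommRing A] [Algebra R A] (φ : A →ₐ[R] A)
variable {L : Type} [AddCommGroup L] [Module R L] [Module A L] [IsScalarTower R A L]

/-- The `A`-submodule `M^φ_A L` of `A ⊗ L ⊗ L` of defining relations of `uce^φ_A L`. -/
def uceRel (S : HLR R A φ L) : Submodule A (A ⊗[R] (L ⊗[R] L)) :=
  Submodule.span A
    ({t | ∃ (a : A) (x : L), t = a ⊗ₜ[R] (x ⊗ₜ[R] x)} ∪
     {t | ∃ (a : A) (x y : L), t = a ⊗ₜ[R] (x ⊗ₜ[R] y) + a ⊗ₜ[R] (y ⊗ₜ[R] x)} ∪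
     {t | ∃ (a : A) (x y z : L), t =
        a ⊗ₜ[R] (S.alpha x ⊗ₜ[R] S.bracket y z)
          + a ⊗ₜ[R] (S.alpha y ⊗ₜ[R] S.bracket z x)
          + a ⊗ₜ[R] (S.alpha z ⊗ₜ[R] S.bracket x y)} ∪
     {t | ∃ (a : A) (x y x' y' : L), t =
        φ a ⊗ₜ[R] (S.bracket x y ⊗ₜ[R] S.bracket x' y')
          + S.rho (S.bracket x y) a ⊗ₜ[R] (S.alpha x' ⊗ₜ[R] S.alpha y')
          - (1 : A) ⊗ₜ[R] (S.bracket x y ⊗ₜ[R] (a • S.bracket x' y'))})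

/-- The underlying `A`-module of `uce^φ_A L`. -/
abbrev UCE (S : HLR R A φ L) : Type := (A ⊗[R] (L ⊗[R] L)) ⧸ uceRel φ S

/-- The coset `(a, x, y)` in `uce^φ_A L`. -/
noncomputable def uceMk (S : HLR R A φ L) (a : A) (x y : L) : UCE φ S :=
  Submodule.Quotient.mk (a ⊗ₜ[R] (x ⊗ₜ[R] y))

/-- `U` is the hom-Lie-Rinehart structure of `uce^φ_A L`: its bracket, twist map and anchor
are given by the defining formulas on cosets. -/
def IsUceStructure (S : HLR R A φ L) (U : HLR R A φ (UCE φ S)) : Prop :=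
  (∀ (a₁ a₂ : A) (x₁ y₁ x₂ y₂ : L),
    U.bracket (uceMk φ S a₁ x₁ y₁) (uceMk φ S a₂ x₂ y₂) =
      uceMk φ S (φ (a₁ * a₂)) (S.bracket x₁ y₁) (S.bracket x₂ y₂)
      + uceMk φ S (φ a₁ * S.rho (S.bracket x₁ y₁) a₂) (S.alpha x₂) (S.alpha y₂)
      - uceMk φ S (φ a₂ * S.rho (S.bracket x₂ y₂) a₁) (S.alpha x₁) (S.alpha y₁)) ∧
  (∀ (a : A) (x y : L),
    U.alpha (uceMk φ S a x y) = uceMk φ S (φ a) (S.alpha x) (S.alpha y)) ∧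
  (∀ (a b : A) (x y : L),
    U.rho (uceMk φ S a x y) b = φ a * S.rho (S.bracket x y) b)

/-- `u` is the canonical map `u_L : uce^φ_A L → L`, `(a,x,y) ↦ a • [x,y]`. -/
def IsUceMap (S : HLR R A φ L) (u : UCE φ S → L) : Prop :=
  (∀ ξ η, u (ξ + η) = u ξ + u η) ∧
  (∀ (a : A) (ξ : UCE φ S), u (a • ξ) = a • u ξ) ∧
  (∀ (a : A) (x y : L), u (uceMk φ S a x y) = a • S.bracket x y)

end UceDefs

section MoreDefs

variable {R A : Type} [CommRing R] [CommRing A] [Algebra R A] (φ : A →ₐ[R] A)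

/-- `F` is the homomorphism `uce^φ_A(f)` induced by `f` on universal central extensions. -/
def IsUceFunctorMap {K L : Type}
    [AddCommGroup K] [Module R K] [Module A K] [IsScalarTower R A K]
    [AddCommGroup L] [Module R L] [Module A L] [IsScalarTower R A L]
    (SK : HLR R A φ K) (SL : HLR R A φ L)
    (UK : HLR R A φ (UCE φ SK)) (UL : HLR R A φ (UCE φ SL))
    (f : K → L) (F : UCE φ SK → UCE φ SL) : Prop :=
  IsHLRHom UK UL F ∧
  ∀ (a : A) (x y : K), F (uceMk φ SK a x y) = uceMk φ SL a (f x) (f y)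

/-- `D` is an `α`-derivation of `(L, α_L)` with symbol `σD`. -/
def IsAlphaDeriv {L : Type}
    [AddCommGroup L] [Module R L] [Module A L] [IsScalarTower R A L]
    (S : HLR R A φ L) (D : L → L) (σD : A → A) : Prop :=
  (∀ x y, D (x + y) = D x + D y) ∧
  (∀ (r : R) (x : L), D (r • x) = r • D x) ∧
  (∀ a b, σD (a + b) = σD a + σD b) ∧
  (∀ (r : R) (a : A), σD (r • a) = r • σD a) ∧
  (∀ a b, σD (a * b) = φ a * σD b + φ b * σD a) ∧
  (∀ x, D (S.alpha x) = S.alpha (D x)) ∧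
  (∀ x y, D (S.bracket x y) = S.bracket (D x) (S.alpha y) + S.bracket (S.alpha x) (D y)) ∧
  (∀ a, σD (φ a) = φ (σD a)) ∧
  (∀ (a : A) (x : L), D (a • x) = φ a • D x + σD a • S.alpha x) ∧
  (∀ (x : L) (a : A), σD (S.rho x a) = S.rho (S.alpha x) (σD a) + S.rho (D x) (φ a))

/-- A quasi hom-action of `(L, α_L)` on `(M, α_M)`. -/
def IsQuasiHomAction {L M : Type}
    [AddCommGroup L] [Module R L] [Module A L] [IsScalarTower R A L]
    [AddCommGroup M] [Module R M] [Module A M] [IsScalarTower R A M]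
    (SL : HLR R A φ L) (SM : HLR R A φ M) (act : L → M → M) : Prop :=
  (∀ (x : L) (a : A) (m : M),
      act x (a • m) = φ a • act x m + SL.rho x a • SM.alpha m) ∧
  (∀ (x y : L) (m : M),
      act (SL.bracket x y) (SM.alpha m)
        = act (SL.alpha x) (act y m) - act (SL.alpha y) (act x m)) ∧
  (∀ (x : L) (m n : M),
      act (SL.alpha x) (SM.bracket m n)
        = SM.bracket (act x m) (SM.alpha n) + SM.bracket (SM.alpha m) (act x n)) ∧
  (∀ (x : L) (m : M) (a : A),
      SM.rho (act x m) (φ a)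
        = SL.rho (SL.alpha x) (SM.rho m a) - SM.rho (SM.alpha m) (SL.rho x a)) ∧
  (∀ (x : L) (m : M), SM.alpha (act x m) = act (SL.alpha x) (SM.alpha m))

/-- Compatibility of two quasi hom-actions on each other. -/
def AreCompatibleActions {L M : Type}
    [AddCommGroup L] [Module R L] [Module A L] [IsScalarTower R A L]
    [AddCommGroup M] [Module R M] [Module A M] [IsScalarTower R A M]
    (SL : HLR R A φ L) (SM : HLR R A φ M)
    (actLM : L → M → M) (actML : M → L → L) : Prop :=
  (∀ (x : L) (m : M) (a : A), SM.rho (actLM x m) a = - SL.rho (actML m x) a) ∧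
  (∀ (m : M) (x : L) (n : M), actLM (actML m x) n = SM.bracket n (actLM x m)) ∧
  (∀ (x : L) (m : M) (y : L), actML (actLM x m) y = SL.bracket y (actML m x))

end MoreDefs

section StarDefs

variable {R A : Type} [CommRing R] [CommRing A] [Algebra R A] (φ : A →ₐ[R] A)
variable {L M : Type}
  [AddCommGroup L] [Module R L] [Module A L] [IsScalarTower R A L]
  [AddCommGroup M] [Module R M] [Module A M] [IsScalarTower R A M]

/-- The `A`-submodule of defining relations of the non-abelian tensor product `L ∗ M`,
inside the free `A`-module on the symbols `x ∗ m`. -/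
noncomputable def starRel (SL : HLR R A φ L) (SM : HLR R A φ M)
    (actLM : L → M → M) (actML : M → L → L) : Submodule A ((L × M) →₀ A) :=
  Submodule.span A
    ({t | ∃ (x y : L) (m : M), t =
        Finsupp.single (x + y, m) (1 : A) - Finsupp.single (x, m) 1
          - Finsupp.single (y, m) 1} ∪
     {t | ∃ (r : R) (x : L) (m : M), t =
        Finsupp.single (r • x, m) (1 : A) - r • Finsupp.single (x, m) (1 : A)} ∪
     {t | ∃ (x : L) (m n : M), t =
        Finsupp.single (x, m + n) (1 : A) - Finsupp.single (x, m) 1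
          - Finsupp.single (x, n) 1} ∪
     {t | ∃ (r : R) (x : L) (m : M), t =
        Finsupp.single (x, r • m) (1 : A) - r • Finsupp.single (x, m) (1 : A)} ∪
     {t | ∃ (x y : L) (m : M), t =
        Finsupp.single (SL.bracket x y, SM.alpha m) (1 : A)
          - Finsupp.single (SL.alpha x, actLM y m) 1
          + Finsupp.single (SL.alpha y, actLM x m) 1} ∪
     {t | ∃ (x : L) (m n : M), t =
        Finsupp.single (SL.alpha x, SM.bracket m n) (1 : A)
          - Finsupp.single (actML n x, SM.alpha m) 1
          + Finsupp.single (actML m x, SM.alpha n) 1} ∪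
     {t | ∃ (a b : A) (x y : L) (m n : M), t =
        Finsupp.single (a • actML m x, b • actLM y n) (1 : A)
          + Finsupp.single (b • actML n y, a • actLM x m) 1} ∪
     {t | ∃ (a b : A) (x y : L) (m n : M), t =
        Finsupp.single (a • actML m x, b • actLM y n) (1 : A)
          - φ (a * b) • Finsupp.single (actML m x, actLM y n) (1 : A)
          + (φ a * SM.rho (actLM x m) b) • Finsupp.single (SL.alpha y, SM.alpha n) (1 : A)
          - (φ b * SM.rho (actLM y n) a) • Finsupp.single (SL.alpha x, SM.alpha m) (1 : A)})

/-- The underlying `A`-module of the non-abelian tensor product `L ∗ M`. -/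
abbrev StarMod (SL : HLR R A φ L) (SM : HLR R A φ M)
    (actLM : L → M → M) (actML : M → L → L) : Type :=
  ((L × M) →₀ A) ⧸ starRel φ SL SM actLM actML

/-- The generator `x ∗ m` of `L ∗ M`. -/
noncomputable def starMk (SL : HLR R A φ L) (SM : HLR R A φ M)
    (actLM : L → M → M) (actML : M → L → L) (x : L) (m : M) :
    StarMod φ SL SM actLM actML :=
  Submodule.Quotient.mk (Finsupp.single (x, m) (1 : A))

/-- `U` is the hom-Lie-Rinehart structure of the non-abelian tensor product `L ∗ M`. -/
def IsStarStructure (SL : HLR R A φ L) (SM : HLR R A φ M)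
    (actLM : L → M → M) (actML : M → L → L)
    (U : HLR R A φ (StarMod φ SL SM actLM actML)) : Prop :=
  (∀ (x : L) (m : M),
      U.alpha (starMk φ SL SM actLM actML x m)
        = starMk φ SL SM actLM actML (SL.alpha x) (SM.alpha m)) ∧
  (∀ (a b : A) (x y : L) (m n : M),
      U.bracket (a • starMk φ SL SM actLM actML x m)
          (b • starMk φ SL SM actLM actML y n)
        = - starMk φ SL SM actLM actML (a • actML m x) (b • actLM y n)) ∧
  (∀ (x : L) (m : M) (a : A),
      U.rho (starMk φ SL SM actLM actML x m) a = SM.rho (actLM x m) a)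

/-- A hom-Lie-Rinehart pairing of `(L, α_L)` and `(M, α_M)` into `(N, α_N)`. -/
def IsHLRPairing {N : Type}
    [AddCommGroup N] [Module R N] [Module A N] [IsScalarTower R A N]
    (SL : HLR R A φ L) (SM : HLR R A φ M) (SN : HLR R A φ N)
    (actLM : L → M → M) (actML : M → L → L) (f : L → M → N) : Prop :=
  (∀ (x y : L) (m : M), f (x + y) m = f x m + f y m) ∧
  (∀ (r : R) (x : L) (m : M), f (r • x) m = r • f x m) ∧
  (∀ (x : L) (m n : M), f x (m + n) = f x m + f x n) ∧
  (∀ (r : R) (x : L) (m : M), f x (r • m) = r • f x m) ∧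
  (∀ (x : L) (m : M) (a : A), SN.rho (f x m) a = SM.rho (actLM x m) a) ∧
  (∀ (x y : L) (m : M),
      f (SL.bracket x y) (SM.alpha m)
        = f (SL.alpha x) (actLM y m) - f (SL.alpha y) (actLM x m)) ∧
  (∀ (x : L) (m n : M),
      f (SL.alpha x) (SM.bracket m n)
        = f (actML n x) (SM.alpha m) - f (actML m x) (SM.alpha n)) ∧
  (∀ (x : L) (m : M), f (SL.alpha x) (SM.alpha m) = SN.alpha (f x m)) ∧
  (∀ (a b : A) (x y : L) (m n : M),
      f (a • actML m x) (b • actLM y n)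
        = - (φ (a * b) • SN.bracket (f x m) (f y n))
          - (φ a * SN.rho (f x m) b) • SN.alpha (f y n)
          + (φ b * SN.rho (f y n) a) • SN.alpha (f x m))

end StarDefs

/-! The universal `α`-central extension `L'` of `K` is perfect: otherwise `x ↦ (x, 0)` and
`x ↦ (x, [x])` would be two different lifts of `τ` to the `α`-central extension
`L' × L'/[L', L'] → K`. If `σ (τ x) = 0`, then `τ x` and `τ (α x)` are central in `K`; writing
`a = φ b`, perfectness of `L'` and the hom-Jacobi identity make `a • α x` central in `L'`.
For universality, a central extension `F → L` pulls back along `σ` to a central extension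
`F ×_L K → K`, and lifts of `τ` to the pullback are exactly the homomorphisms `L' → F` over `L`. -/

variable {R A : Type} [CommRing R] [CommRing A] [Algebra R A] {φ : A →ₐ[R] A}

namespace HLR

section Basic

variable {X : Type} [AddCommGroup X] [Module R X] [Module A X] [IsScalarTower R A X]
  (S : HLR R A φ X)

def alphaₛₗ : X →ₛₗ[(φ : A →+* A)] X where
  toFun := S.alpha
  map_add' := S.alpha_add
  map_smul' := S.alpha_smulA

lemma alpha_zero : S.alpha 0 = 0 :=
  S.alphaₛₗ.map_zero

lemma bracket_zero_left (y : X) : S.bracket 0 y = 0 :=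
  (AddMonoidHom.mk' (S.bracket · y) (S.add_left · · y)).map_zero

lemma bracket_zero_right (x : X) : S.bracket x 0 = 0 :=
  (AddMonoidHom.mk' (S.bracket x) (S.add_right x)).map_zero

variable {S}

lemma bracket_eq_zero_of_mem_center_left {c : X} (hc : c ∈ S.center) (z : X) :
    S.bracket c z = 0 := by
  simpa using (hc 1 z).1

lemma bracket_eq_zero_of_mem_center_right {c : X} (hc : c ∈ S.center) (z : X) :
    S.bracket z c = 0 := by
  rw [S.skew, bracket_eq_zero_of_mem_center_left hc, neg_zero]

variable (S)

def restrict (s : Submodule A X) (hb : ∀ x ∈ s, ∀ y ∈ s, S.bracket x y ∈ s)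
    (ha : ∀ x ∈ s, S.alpha x ∈ s) : HLR R A φ s where
  bracket x y := ⟨S.bracket x y, hb x x.2 y y.2⟩
  add_left x y z := Subtype.ext (S.add_left x y z)
  add_right x y z := Subtype.ext (S.add_right x y z)
  smul_left r x y := Subtype.ext (S.smul_left r x y)
  smul_right r x y := Subtype.ext (S.smul_right r x y)
  skew x y := Subtype.ext (S.skew x y)
  alpha x := ⟨S.alpha x, ha x x.2⟩
  alpha_add x y := Subtype.ext (S.alpha_add x y)
  alpha_smulR r x := Subtype.ext (S.alpha_smulR r x)
  rho x := S.rho x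
  rho_add_left x y := S.rho_add_left x y
  rho_smulR_left r x := S.rho_smulR_left r x
  rho_add_right x := S.rho_add_right x
  rho_smulR_right x := S.rho_smulR_right x
  rho_deriv x := S.rho_deriv x
  alpha_bracket x y := Subtype.ext (S.alpha_bracket x y)
  hom_jacobi x y z := Subtype.ext (S.hom_jacobi x y z)
  alpha_smulA a x := Subtype.ext (S.alpha_smulA a x)
  rho_alpha x := S.rho_alpha x
  rho_bracket x y := S.rho_bracket x y
  rho_smulA a x := S.rho_smulA a x
  leibniz x a y := Subtype.ext (S.leibniz x a y)

end Basic

section Abelianization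

variable {X : Type} [AddCommGroup X] [Module R X] [Module A X] [IsScalarTower R A X]
  (S : HLR R A φ X)

def derived : Submodule A X :=
  Submodule.span A {z | ∃ x y, z = S.bracket x y}

lemma isPerfect_iff_derived_eq_top : S.IsPerfect ↔ S.derived = ⊤ :=
  Iff.rfl

lemma derived_le_comap_alphaₛₗ : S.derived ≤ S.derived.comap S.alphaₛₗ := by
  refine Submodule.span_le.mpr ?_
  rintro _ ⟨x, y, rfl⟩
  exact Submodule.subset_span ⟨S.alpha x, S.alpha y, S.alpha_bracket x y⟩

lemma rho_smul_alpha_mem_derived (x : X) (a : A) (y : X) :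
    S.rho x a • S.alpha y ∈ S.derived := by
  have h : S.rho x a • S.alpha y = S.bracket x (a • y) - φ a • S.bracket x y := by
    rw [S.leibniz]; abel
  rw [h]
  exact sub_mem (Submodule.subset_span ⟨x, a • y, rfl⟩)
    (Submodule.smul_mem _ _ (Submodule.subset_span ⟨x, y, rfl⟩))

def abelianizationAlpha : X ⧸ S.derived →ₛₗ[(φ : A →+* A)] X ⧸ S.derived :=
  S.derived.mapQ S.derived S.alphaₛₗ S.derived_le_comap_alphaₛₗ

lemma abelianizationAlpha_mk (x : X) :
    S.abelianizationAlpha (S.derived.mkQ x) = S.derived.mkQ (S.alpha x) :=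
  rfl

lemma abelianizationAlpha_smulR (r : R) (q : X ⧸ S.derived) :
    S.abelianizationAlpha (r • q) = r • S.abelianizationAlpha q := by
  induction q using Submodule.Quotient.induction_on with
  | H y =>
    rw [← Submodule.Quotient.mk_smul]
    exact congrArg S.derived.mkQ (S.alpha_smulR r y)

lemma rho_smul_abelianizationAlpha (x : X) (a : A) (q : X ⧸ S.derived) :
    S.rho x a • S.abelianizationAlpha q = 0 := by
  induction q using Submodule.Quotient.induction_on with
  | H y =>
    rw [← Submodule.mkQ_apply, abelianizationAlpha_mk, ← map_smul, Submodule.mkQ_apply,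
      Submodule.Quotient.mk_eq_zero]
    exact S.rho_smul_alpha_mem_derived x a y

def prodAbelianization : HLR R A φ (X × (X ⧸ S.derived)) where
  bracket x y := (S.bracket x.1 y.1, 0)
  add_left x y z := by ext <;> simp [S.add_left]
  add_right x y z := by ext <;> simp [S.add_right]
  smul_left r x y := by ext <;> simp [S.smul_left]
  smul_right r x y := by ext <;> simp [S.smul_right]
  skew x y := by ext <;> simp [S.skew x.1]
  alpha p := (S.alpha p.1, S.abelianizationAlpha p.2)
  alpha_add x y := by ext <;> simp [S.alpha_add]
  alpha_smulR r x := by ext <;> simp [S.alpha_smulR, abelianizationAlpha_smulR]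
  rho p := S.rho p.1
  rho_add_left x y := S.rho_add_left x.1 y.1
  rho_smulR_left r x := S.rho_smulR_left r x.1
  rho_add_right x := S.rho_add_right x.1
  rho_smulR_right x := S.rho_smulR_right x.1
  rho_deriv x := S.rho_deriv x.1
  alpha_bracket x y := by ext <;> simp [S.alpha_bracket]
  hom_jacobi x y z := by ext <;> simp [S.hom_jacobi x.1 y.1 z.1]
  alpha_smulA a x := by ext <;> simp [S.alpha_smulA]
  rho_alpha x := S.rho_alpha x.1
  rho_bracket x y := S.rho_bracket x.1 y.1
  rho_smulA a x := S.rho_smulA a x.1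
  leibniz x a y := by ext <;> simp [S.leibniz, rho_smul_abelianizationAlpha]

variable {S}

lemma mem_center_prodAbelianization {p : X × (X ⧸ S.derived)} (hp : p.1 ∈ S.center) :
    p ∈ S.prodAbelianization.center := fun a z =>
  ⟨Prod.ext (hp a z.1).1 rfl, Prod.ext (hp a z.1).2.1 rfl, (hp a z.1).2.2⟩

end Abelianization

end HLR

namespace IsHLRHom

variable {X Y Z : Type}
  [AddCommGroup X] [Module R X] [Module A X] [IsScalarTower R A X]
  [AddCommGroup Y] [Module R Y] [Module A Y] [IsScalarTower R A Y]
  [AddCommGroup Z] [Module R Z] [Module A Z] [IsScalarTower R A Z]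
  {SX : HLR R A φ X} {SY : HLR R A φ Y} {SZ : HLR R A φ Z} {f : X → Y} {g : Y → Z}

lemma map_smul (hf : IsHLRHom SX SY f) (a : A) (x : X) : f (a • x) = a • f x :=
  hf.2.1 a x

lemma map_bracket (hf : IsHLRHom SX SY f) (x y : X) :
    f (SX.bracket x y) = SY.bracket (f x) (f y) :=
  hf.2.2.1 x y

lemma map_alpha (hf : IsHLRHom SX SY f) (x : X) : f (SX.alpha x) = SY.alpha (f x) :=
  hf.2.2.2.1 x

lemma rho_map (hf : IsHLRHom SX SY f) (x : X) (a : A) : SY.rho (f x) a = SX.rho x a :=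
  hf.2.2.2.2 x a

def toLinearMap (hf : IsHLRHom SX SY f) : X →ₗ[A] Y where
  toFun := f
  map_add' := hf.1
  map_smul' := hf.2.1

lemma map_zero (hf : IsHLRHom SX SY f) : f 0 = 0 :=
  hf.toLinearMap.map_zero

lemma comp (hf : IsHLRHom SX SY f) (hg : IsHLRHom SY SZ g) :
    IsHLRHom SX SZ (fun x => g (f x)) :=
  ⟨fun x y => (congrArg g (hf.1 x y)).trans (hg.1 _ _),
    fun a x => (congrArg g (hf.map_smul a x)).trans (hg.map_smul _ _),
    fun x y => (congrArg g (hf.map_bracket x y)).trans (hg.map_bracket _ _),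
    fun x => (congrArg g (hf.map_alpha x)).trans (hg.map_alpha _),
    fun x a => (hg.rho_map _ a).trans (hf.rho_map x a)⟩

lemma map_alpha_eq_zero (hf : IsHLRHom SX SY f) {x : X} (hx : f x = 0) :
    f (SX.alpha x) = 0 := by
  rw [hf.map_alpha, hx, SY.alpha_zero]

def kerHLR (hf : IsHLRHom SX SY f) : HLR R A φ (LinearMap.ker hf.toLinearMap) :=
  SX.restrict _
    (fun x hx y _ => by
      change f _ = 0
      rw [hf.map_bracket, show f x = 0 from hx, SY.bracket_zero_left])
    (fun _ hx => hf.map_alpha_eq_zero hx)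

lemma isAlphaCentralExt_kerHLR (hf : IsHLRHom SX SY f) (hsurj : Surjective f)
    (hcent : ∀ x, f x = 0 → SX.alpha x ∈ SX.center) :
    IsAlphaCentralExt hf.kerHLR SX SY Subtype.val f :=
  ⟨⟨fun _ _ => rfl, fun _ _ => rfl, fun _ _ => rfl, fun _ => rfl, fun _ _ => rfl⟩, hf,
    Subtype.val_injective, hsurj, Subtype.range_coe_subtype, fun m => hcent m m.2⟩

end IsHLRHom

namespace HLR.IsPerfect

variable {X Y Z : Type}
  [AddCommGroup X] [Module R X] [Module A X] [IsScalarTower R A X]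
  [AddCommGroup Y] [Module R Y] [Module A Y] [IsScalarTower R A Y]
  [AddCommGroup Z] [Module R Z] [Module A Z] [IsScalarTower R A Z]
  {SX : HLR R A φ X} {SY : HLR R A φ Y} {SZ : HLR R A φ Z} {f : X → Y} {g : Y → Z}

/-- On a bracket `[y, u]` this is the hom-Jacobi identity: `[u, q]` and `[q, y]` lie in the
kernel of `f`, hence in the center. -/
lemma bracket_alpha_eq_zero (hX : SX.IsPerfect) (hf : IsHLRHom SX SY f)
    (hfker : ∀ x, f x = 0 → x ∈ SX.center) {q : X} (hq : f q ∈ SY.center)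
    (hαq : f (SX.alpha q) ∈ SY.center) (z : X) : SX.bracket (SX.alpha q) z = 0 := by
  have hz : z ∈ SX.derived := Submodule.eq_top_iff'.mp hX z
  induction hz using Submodule.span_induction with
  | mem w hw =>
    obtain ⟨y, u, rfl⟩ := hw
    have huq : SX.bracket u q ∈ SX.center := hfker _ <| by
      rw [hf.map_bracket, HLR.bracket_eq_zero_of_mem_center_right hq]
    have hqy : SX.bracket q y ∈ SX.center := hfker _ <| by
      rw [hf.map_bracket, HLR.bracket_eq_zero_of_mem_center_left hq]
    simpa [HLR.bracket_eq_zero_of_mem_center_right huq,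
      HLR.bracket_eq_zero_of_mem_center_right hqy] using SX.hom_jacobi q y u
  | zero => exact SX.bracket_zero_right _
  | add x y _ _ hx hy => rw [SX.add_right, hx, hy, add_zero]
  | smul a x _ hx =>
    rw [SX.leibniz, hx, ← hf.rho_map, (hαq a 0).2.2, smul_zero, zero_smul, add_zero]

lemma alpha_mem_center (hφ : Surjective φ) (hX : SX.IsPerfect) (hf : IsHLRHom SX SY f)
    (hfker : ∀ x, f x = 0 → x ∈ SX.center) (hg : IsHLRHom SY SZ g)
    (hgker : ∀ y, g y = 0 → y ∈ SY.center) {x : X} (hx : g (f x) = 0) :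
    SX.alpha x ∈ SX.center := by
  have hgf := hf.comp hg
  have hbracket : ∀ q, g (f q) = 0 → ∀ (a : A) (z : X), SX.bracket (a • SX.alpha q) z = 0 := by
    intro q hq a z
    obtain ⟨b, rfl⟩ := hφ a
    have hbq : g (f (b • q)) = 0 := by rw [hgf.map_smul, hq, smul_zero]
    rw [← SX.alpha_smulA]
    exact hX.bracket_alpha_eq_zero hf hfker (hgker _ hbq) (hgker _ (hgf.map_alpha_eq_zero hbq)) z
  have hαx := hgf.map_alpha_eq_zero hx
  exact fun a z => ⟨hbracket x hx a z, hbracket _ hαx a z,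
    (hf.rho_map _ a).symm.trans (hgker _ hαx a 0).2.2⟩

end HLR.IsPerfect

namespace IsHLRHom

variable {F K L : Type}
  [AddCommGroup F] [Module R F] [Module A F] [IsScalarTower R A F]
  [AddCommGroup K] [Module R K] [Module A K] [IsScalarTower R A K]
  [AddCommGroup L] [Module R L] [Module A L] [IsScalarTower R A L]
  {SF : HLR R A φ F} {SK : HLR R A φ K} {SL : HLR R A φ L} {γ : F → L} {σ : K → L}
  (hγ : IsHLRHom SF SL γ) (hσ : IsHLRHom SK SL σ)

def pullback : Submodule A (F × K) :=
  LinearMap.eqLocus (hγ.toLinearMap ∘ₗ LinearMap.fst A F K)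
    (hσ.toLinearMap ∘ₗ LinearMap.snd A F K)

lemma mem_pullback {p : F × K} : p ∈ hγ.pullback hσ ↔ γ p.1 = σ p.2 :=
  Iff.rfl

lemma rho_fst_pullback (p : hγ.pullback hσ) (a : A) : SF.rho p.1.1 a = SK.rho p.1.2 a := by
  rw [← hγ.rho_map, ← hσ.rho_map, (hγ.mem_pullback hσ).mp p.2]

def pullbackHLR : HLR R A φ (hγ.pullback hσ) where
  bracket p q := ⟨(SF.bracket p.1.1 q.1.1, SK.bracket p.1.2 q.1.2), by
    rw [mem_pullback, hγ.map_bracket, hσ.map_bracket, (hγ.mem_pullback hσ).mp p.2,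
      (hγ.mem_pullback hσ).mp q.2]⟩
  add_left x y z := by ext <;> simp [SF.add_left, SK.add_left]
  add_right x y z := by ext <;> simp [SF.add_right, SK.add_right]
  smul_left r x y := by ext <;> simp [SF.smul_left, SK.smul_left]
  smul_right r x y := by ext <;> simp [SF.smul_right, SK.smul_right]
  skew x y := by ext <;> simp [SF.skew x.1.1, SK.skew x.1.2]
  alpha p := ⟨(SF.alpha p.1.1, SK.alpha p.1.2), by
    rw [mem_pullback, hγ.map_alpha, hσ.map_alpha, (hγ.mem_pullback hσ).mp p.2]⟩
  alpha_add x y := by ext <;> simp [SF.alpha_add, SK.alpha_add]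
  alpha_smulR r x := by ext <;> simp [SF.alpha_smulR, SK.alpha_smulR]
  rho p := SF.rho p.1.1
  rho_add_left x y := SF.rho_add_left x.1.1 y.1.1
  rho_smulR_left r x := SF.rho_smulR_left r x.1.1
  rho_add_right x := SF.rho_add_right x.1.1
  rho_smulR_right x := SF.rho_smulR_right x.1.1
  rho_deriv x := SF.rho_deriv x.1.1
  alpha_bracket x y := by ext <;> simp [SF.alpha_bracket, SK.alpha_bracket]
  hom_jacobi x y z := by
    ext <;> simp [SF.hom_jacobi x.1.1 y.1.1 z.1.1, SK.hom_jacobi x.1.2 y.1.2 z.1.2]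
  alpha_smulA a x := by ext <;> simp [SF.alpha_smulA, SK.alpha_smulA]
  rho_alpha x := SF.rho_alpha x.1.1
  rho_bracket x y := SF.rho_bracket x.1.1 y.1.1
  rho_smulA a x := SF.rho_smulA a x.1.1
  leibniz x a y := by ext <;> simp [SF.leibniz, SK.leibniz, hγ.rho_fst_pullback hσ x a]

lemma pullback_fst : IsHLRHom (hγ.pullbackHLR hσ) SF (fun p => p.1.1) :=
  ⟨fun _ _ => rfl, fun _ _ => rfl, fun _ _ => rfl, fun _ => rfl, fun _ _ => rfl⟩

lemma pullback_snd : IsHLRHom (hγ.pullbackHLR hσ) SK (fun p => p.1.2) :=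
  ⟨fun _ _ => rfl, fun _ _ => rfl, fun _ _ => rfl, fun _ => rfl,
    fun p a => (hγ.rho_fst_pullback hσ p a).symm⟩

lemma pullback_lift {X : Type} [AddCommGroup X] [Module R X] [Module A X] [IsScalarTower R A X]
    {SX : HLR R A φ X} {u : X → F} {v : X → K} (hu : IsHLRHom SX SF u)
    (hv : IsHLRHom SX SK v) (huv : ∀ x, γ (u x) = σ (v x)) :
    IsHLRHom SX (hγ.pullbackHLR hσ) (fun x => ⟨(u x, v x), huv x⟩) :=
  ⟨fun x y => Subtype.ext (Prod.ext (hu.1 x y) (hv.1 x y)),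
    fun a x => Subtype.ext (Prod.ext (hu.map_smul a x) (hv.map_smul a x)),
    fun x y => Subtype.ext (Prod.ext (hu.map_bracket x y) (hv.map_bracket x y)),
    fun x => Subtype.ext (Prod.ext (hu.map_alpha x) (hv.map_alpha x)),
    fun x a => hu.rho_map x a⟩

lemma mem_center_pullbackHLR {p : hγ.pullback hσ} (hp₁ : p.1.1 ∈ SF.center) (hp₂ : p.1.2 = 0) :
    p ∈ (hγ.pullbackHLR hσ).center := fun a z =>
  ⟨Subtype.ext (Prod.ext (hp₁ a z.1.1).1 (by simp [pullbackHLR, hp₂, SK.bracket_zero_left])),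
    Subtype.ext (Prod.ext (hp₁ a z.1.1).2.1
      (by simp [pullbackHLR, hp₂, SK.alpha_zero, SK.bracket_zero_left])),
    (hp₁ a z.1.1).2.2⟩

end IsHLRHom

namespace IsUniversalAlphaCentralExt

variable {N L' K : Type}
  [AddCommGroup N] [Module R N] [Module A N] [IsScalarTower R A N]
  [AddCommGroup L'] [Module R L'] [Module A L'] [IsScalarTower R A L']
  [AddCommGroup K] [Module R K] [Module A K] [IsScalarTower R A K]
  {SN : HLR R A φ N} {SL' : HLR R A φ L'} {SK : HLR R A φ K} {j : N → L'} {τ : L' → K}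

lemma existsUnique_lift (hU : IsUniversalAlphaCentralExt SN SL' SK j τ)
    {X : Type} [AddCommGroup X] [Module R X] [Module A X] [IsScalarTower R A X]
    {SX : HLR R A φ X} {f : X → K} (hf : IsHLRHom SX SK f) (hsurj : Surjective f)
    (hcent : ∀ x, f x = 0 → SX.alpha x ∈ SX.center) :
    ∃! h : L' → X, IsHLRHom SL' SX h ∧ ∀ x, f (h x) = τ x :=
  hU.2 _ X hf.kerHLR SX Subtype.val f (hf.isAlphaCentralExt_kerHLR hsurj hcent)

lemma isPerfect (hU : IsUniversalAlphaCentralExt SN SL' SK j τ) : SL'.IsPerfect := by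
  obtain ⟨-, hτ, -, hτsurj, -, hτker⟩ := hU.1
  let D := SL'.derived
  have hf : IsHLRHom SL'.prodAbelianization SK (fun v => τ v.1) :=
    ⟨fun v w => hτ.1 v.1 w.1, fun a v => hτ.map_smul a v.1, fun v w => hτ.map_bracket v.1 w.1,
      fun v => hτ.map_alpha v.1, fun v => hτ.rho_map v.1⟩
  have hsurj : Surjective (fun v : L' × (L' ⧸ D) => τ v.1) := fun k =>
    let ⟨x, hx⟩ := hτsurj k; ⟨(x, 0), hx⟩
  have hcent : ∀ v : L' × (L' ⧸ D), τ v.1 = 0 → SL'.prodAbelianization.alpha v ∈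
      SL'.prodAbelianization.center := fun v hv =>
    HLR.mem_center_prodAbelianization (hτker (hτ.map_alpha_eq_zero hv))
  have hinl : IsHLRHom SL' SL'.prodAbelianization (fun x => (x, (0 : L' ⧸ D))) :=
    ⟨fun x y => by simp, fun a x => by simp, fun x y => rfl,
      fun x => Prod.ext rfl (map_zero _).symm, fun _ _ => rfl⟩
  have hgraph : IsHLRHom SL' SL'.prodAbelianization (fun x => (x, D.mkQ x)) :=
    ⟨fun x y => by simp, fun a x => by simp,
      fun x y => Prod.ext rfl ((D.mkQ_apply _).trans
        ((Submodule.Quotient.mk_eq_zero _).mpr (Submodule.subset_span ⟨x, y, rfl⟩))),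
      fun x => rfl, fun _ _ => rfl⟩
  have hlifts := (hU.existsUnique_lift hf hsurj hcent).unique ⟨hinl, fun _ => rfl⟩
    ⟨hgraph, fun _ => rfl⟩
  refine (SL'.isPerfect_iff_derived_eq_top).mpr (eq_top_iff.mpr fun x _ => ?_)
  exact (Submodule.Quotient.mk_eq_zero D).mp (congrArg Prod.snd (congrFun hlifts x)).symm

lemma existsUnique_lift_comp (hU : IsUniversalAlphaCentralExt SN SL' SK j τ)
    {F L : Type} [AddCommGroup F] [Module R F] [Module A F] [IsScalarTower R A F]
    [AddCommGroup L] [Module R L] [Module A L] [IsScalarTower R A L]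
    {SF : HLR R A φ F} {SL : HLR R A φ L} {γ : F → L} {σ : K → L}
    (hγ : IsHLRHom SF SL γ) (hγsurj : Surjective γ) (hγker : ∀ y, γ y = 0 → y ∈ SF.center)
    (hσ : IsHLRHom SK SL σ) :
    ∃! h : L' → F, IsHLRHom SL' SF h ∧ ∀ x, γ (h x) = σ (τ x) := by
  have hsurj : Surjective (fun p : hγ.pullback hσ => p.1.2) := fun k =>
    let ⟨y, hy⟩ := hγsurj (σ k); ⟨⟨(y, k), hy⟩, rfl⟩
  have hcent : ∀ p : hγ.pullback hσ, p.1.2 = 0 →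
      (hγ.pullbackHLR hσ).alpha p ∈ (hγ.pullbackHLR hσ).center := by
    intro p hp
    have hp₁ : γ p.1.1 = 0 := by rw [(hγ.mem_pullback hσ).mp p.2, hp, hσ.map_zero]
    exact hγ.mem_center_pullbackHLR hσ (hγker _ (hγ.map_alpha_eq_zero hp₁))
      ((hγ.pullback_snd hσ).map_alpha_eq_zero hp)
  obtain ⟨θ, ⟨hθ, hθτ⟩, hθuniq⟩ := hU.existsUnique_lift (hγ.pullback_snd hσ) hsurj hcent
  refine ⟨fun x => (θ x).1.1, ⟨hθ.comp (hγ.pullback_fst hσ), fun x => ?_⟩, ?_⟩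
  · rw [(hγ.mem_pullback hσ).mp (θ x).2, hθτ]
  · rintro h ⟨hh, hhτ⟩
    have hθh := hθuniq _ ⟨hγ.pullback_lift hσ hh hU.1.2.1 hhτ, fun _ => rfl⟩
    funext x
    exact congrArg (fun p => p.1.1) (congrFun hθh x)

end IsUniversalAlphaCentralExt

/-- composing a central extension of `(L, α_L)` with a universal `α`-central
extension of its middle algebra yields an `α`-central extension of `(L, α_L)` which is
universal with respect to central extensions of `(L, α_L)` (`φ` surjective). -/
theorem statement_9
    {R A : Type} [CommRing R] [CommRing A] [Algebra R A] (φ : A →ₐ[R] A)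
    (hφ : Function.Surjective ⇑φ)
    {M K L N L' : Type}
    [AddCommGroup M] [Module R M] [Module A M] [IsScalarTower R A M]
    [AddCommGroup K] [Module R K] [Module A K] [IsScalarTower R A K]
    [AddCommGroup L] [Module R L] [Module A L] [IsScalarTower R A L]
    [AddCommGroup N] [Module R N] [Module A N] [IsScalarTower R A N]
    [AddCommGroup L'] [Module R L'] [Module A L'] [IsScalarTower R A L']
    (SM : HLR R A φ M) (SK : HLR R A φ K) (SL : HLR R A φ L)
    (SN : HLR R A φ N) (SL' : HLR R A φ L')
    (i : M → K) (σ : K → L) (j : N → L') (τ : L' → K)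
    (h1 : IsCentralExt SM SK SL i σ)
    (h2 : IsUniversalAlphaCentralExt SN SL' SK j τ) :
    (IsHLRHom SL' SL (fun x => σ (τ x)) ∧
     Function.Surjective (fun x => σ (τ x)) ∧
     ∀ x : L', σ (τ x) = 0 → SL'.alpha x ∈ SL'.center) ∧
    ∀ (H F : Type)
      [AddCommGroup H] [Module R H] [Module A H] [IsScalarTower R A H]
      [AddCommGroup F] [Module R F] [Module A F] [IsScalarTower R A F]
      (SH : HLR R A φ H) (SF : HLR R A φ F) (k : H → F) (γ : F → L),
      IsCentralExt SH SF SL k γ →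
      ∃! h : L' → F, IsHLRHom SL' SF h ∧ ∀ x, γ (h x) = σ (τ x) := by
  obtain ⟨-, hσ, -, hσsurj, -, hσker⟩ := h1
  obtain ⟨-, hτ, -, hτsurj, -, hτker⟩ := h2.1
  refine ⟨⟨hτ.comp hσ, hσsurj.comp hτsurj, fun x hx => ?_⟩, ?_⟩
  · exact h2.isPerfect.alpha_mem_center hφ hτ (fun _ h => hτker h) hσ (fun _ h => hσker h) hx
  · intro H F _ _ _ _ _ _ _ _ SH SF k γ hγext
    obtain ⟨-, hγ, -, hγsurj, -, hγker⟩ := hγext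
    exact h2.existsUnique_lift_comp hγ hγsurj (fun _ h => hγker h) hσ
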